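/- arXiv:2203.15769 — 2 statements merged into one kernel-verified Lean document; each statement's English description precedes it below -/
import Mathlib

section
/- Let f be a smooth symmetric concave function on an open symmetric convex cone Γ ⊆ ℝⁿ, with f_i ≥ 0 on Γ, and let σ < sup_Γ f with ∂Γ^σ ≠ ∅ and τ_σ > −∞. Then there exists a constant ϑ > 0 depending only on Γ_{σ,f} such that for every λ ∈ ∂Γ^σ with λ_1 ≤ ⋯ ≤ λ_n, one has f_i(λ) ≥ ϑ ∑_{j=1}^n f_j(λ) for all 1 ≤ i ≤ 1 + κ_{Γ_{σ,f}} (level-set partial uniform ellipticity). -/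
open Finset Filter Topology

/-- The i-th partial derivative `f_i(x) = ∂f/∂x_i (x)`. -/
noncomputable def pd {n : ℕ} (f : (Fin n → ℝ) → ℝ) (x : Fin n → ℝ) (i : Fin n) : ℝ :=
  fderiv ℝ f x (Pi.single i 1)

lemma fderiv_apply_sum {n : ℕ} (f : (Fin n → ℝ) → ℝ) (x v : Fin n → ℝ) :
    fderiv ℝ f x v = ∑ i, pd f x i * v i := by
  have hv : v = ∑ i, v i • (Pi.single i (1:ℝ) : Fin n → ℝ) := by
    funext j
    rw [Finset.sum_apply]
    simp [Pi.single_apply]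
  conv_lhs => rw [hv]
  rw [map_sum]
  simp [pd, mul_comm]

lemma grad_ineq {n : ℕ} {Γ : Set (Fin n → ℝ)} {f : (Fin n → ℝ) → ℝ}
    (hconc : ConcaveOn ℝ Γ f) {x y : Fin n → ℝ}
    (hx : x ∈ Γ) (hy : y ∈ Γ) (hdx : DifferentiableAt ℝ f x) :
    f y ≤ f x + fderiv ℝ f x (y - x) := by
  set w := y - x with hw
  have hline : HasDerivAt (fun θ : ℝ => x + θ • w) w 0 := by
    simpa using ((hasDerivAt_id (0:ℝ)).smul_const w).const_add x
  have hg : HasDerivAt (fun θ : ℝ => f (x + θ • w)) (fderiv ℝ f x w) 0 := by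
    have h0 : HasFDerivAt f (fderiv ℝ f x) ((fun θ : ℝ => x + θ • w) 0) := by
      simpa using hdx.hasFDerivAt
    exact h0.comp_hasDerivAt 0 hline
  have hslope : ∀ θ : ℝ, θ ∈ Set.Ioo (0:ℝ) 1 →
      f y - f x ≤ slope (fun θ : ℝ => f (x + θ • w)) 0 θ := by
    intro θ hθ
    have hpt : x + θ • w = (1 - θ) • x + θ • y := by
      rw [hw]; module
    have hcc := hconc.2 hx hy (by linarith [hθ.2] : (0:ℝ) ≤ 1 - θ) (le_of_lt hθ.1)
      (by ring)
    rw [slope_def_field, hpt]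
    simp only [zero_smul, add_zero, sub_zero]
    rw [le_div_iff₀ hθ.1]
    simp only [smul_eq_mul] at hcc
    nlinarith [hcc]
  have htend : Tendsto (slope (fun θ : ℝ => f (x + θ • w)) 0) (𝓝[>] (0:ℝ))
      (𝓝 (fderiv ℝ f x w)) := by
    have := hasDerivAt_iff_tendsto_slope.mp hg
    exact this.mono_left (nhdsWithin_mono 0 (fun θ hθ => ne_of_gt hθ))
  have hev : ∀ᶠ θ in 𝓝[>] (0:ℝ), f y - f x ≤ slope (fun θ : ℝ => f (x + θ • w)) 0 θ := by
    filter_upwards [Ioo_mem_nhdsGT_of_mem (Set.mem_Ico.mpr ⟨le_refl 0, zero_lt_one⟩)]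
      with θ hθ using hslope θ hθ
  have := ge_of_tendsto htend hev
  linarith

lemma pd_antitone {n : ℕ} {Γ : Set (Fin n → ℝ)} {f : (Fin n → ℝ) → ℝ}
    (hopen : IsOpen Γ)
    (hΓsym : ∀ (g : Equiv.Perm (Fin n)), ∀ x ∈ Γ, x ∘ g ∈ Γ)
    (hfsym : ∀ (g : Equiv.Perm (Fin n)), ∀ x ∈ Γ, f (x ∘ g) = f x)
    (hconc : ConcaveOn ℝ Γ f)
    (hdiff : ∀ x ∈ Γ, DifferentiableAt ℝ f x)
    {x : Fin n → ℝ} (hx : x ∈ Γ) {i j : Fin n} (hij : x i ≤ x j) :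
    pd f x j ≤ pd f x i := by
  rcases eq_or_lt_of_le hij with heq | hlt
  · -- equal coordinates: use symmetry of the derivative
    by_cases hij' : i = j
    · rw [hij']
    · set P := (LinearMap.funLeft ℝ ℝ (Equiv.swap i j) :
        (Fin n → ℝ) →ₗ[ℝ] (Fin n → ℝ)).toContinuousLinearMap with hP
      have hPapp : ∀ z : Fin n → ℝ, P z = z ∘ (Equiv.swap i j) := fun z => rfl
      have hPx : P x = x := by
        rw [hPapp]; funext k
        rcases eq_or_ne k i with rfl | hki
        · simp [Equiv.swap_apply_left, heq]
        rcases eq_or_ne k j with rfl | hkj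
        · simp [Equiv.swap_apply_right, heq]
        · simp [Equiv.swap_apply_of_ne_of_ne hki hkj]
      have hEq : (f ∘ P) =ᶠ[𝓝 x] f := by
        filter_upwards [hopen.mem_nhds hx] with z hz
        simpa [hPapp] using hfsym (Equiv.swap i j) z hz
      have hchain : HasFDerivAt (f ∘ P) ((fderiv ℝ f x).comp P) x := by
        have h0 : HasFDerivAt f (fderiv ℝ f x) (P x) := by
          rw [hPx]; exact (hdiff x hx).hasFDerivAt
        exact h0.comp x P.hasFDerivAt
      have hfd : fderiv ℝ f x = (fderiv ℝ f x).comp P := by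
        rw [← hchain.fderiv]
        exact (hEq.fderiv_eq).symm
      have hsingle : P (Pi.single i (1:ℝ)) = Pi.single j (1:ℝ) := by
        rw [hPapp]; funext k
        rcases eq_or_ne k i with rfl | hki
        · simp [Equiv.swap_apply_left, Pi.single_apply, hij']
        rcases eq_or_ne k j with rfl | hkj
        · simp [Equiv.swap_apply_right, Pi.single_apply]
        · simp [Equiv.swap_apply_of_ne_of_ne hki hkj, Pi.single_apply, hki, hkj]
      have : pd f x i = pd f x j := by
        unfold pd
        conv_lhs => rw [hfd]
        simp [hsingle]
      rw [this]
  · -- strict: use the gradient inequality with the swapped point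
    have hne : i ≠ j := fun h => absurd hlt (by rw [h]; exact lt_irrefl _)
    set y := x ∘ (Equiv.swap i j) with hy
    have hyΓ : y ∈ Γ := hΓsym _ x hx
    have hfy : f y = f x := hfsym _ x hx
    have h1 := grad_ineq hconc hx hyΓ (hdiff x hx)
    rw [hfy] at h1
    have h2 : 0 ≤ fderiv ℝ f x (y - x) := by linarith
    have hw : y - x = (x j - x i) • ((Pi.single i (1:ℝ) : Fin n → ℝ) - Pi.single j 1) := by
      funext k
      rcases eq_or_ne k i with rfl | hki
      · simp [hy, Equiv.swap_apply_left, Pi.single_apply, hne]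
      rcases eq_or_ne k j with rfl | hkj
      · simp [hy, Equiv.swap_apply_right, Pi.single_apply, (Ne.symm hne)]
      · simp [hy, Equiv.swap_apply_of_ne_of_ne hki hkj, Pi.single_apply, hki, hkj]
    rw [hw, map_smul, map_sub] at h2
    have h3 : 0 ≤ (x j - x i) * (pd f x i - pd f x j) := by
      simpa [pd, smul_eq_mul] using h2
    nlinarith [h3, sub_pos.mpr hlt]
/-- The set of values `t_λ = (∑ f_i(λ) λ_i)/(∑ f_j(λ))` over the level set `∂Γ^σ`. -/
def tset {n : ℕ} (Γ : Set (Fin n → ℝ)) (f : (Fin n → ℝ) → ℝ) (σ : ℝ) : Set ℝ :=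
  {t : ℝ | ∃ x ∈ Γ, f x = σ ∧ t = (∑ i, pd f x i * x i) / (∑ i, pd f x i)}

/-- The cone `Γ_{σ,f} = { t (λ - τ 𝟏) : λ ∈ ∂Γ^σ, t > 0 }`. -/
def lcone {n : ℕ} (Γ : Set (Fin n → ℝ)) (f : (Fin n → ℝ) → ℝ) (σ τ : ℝ) :
    Set (Fin n → ℝ) :=
  {y | ∃ x ∈ Γ, f x = σ ∧ ∃ t : ℝ, 0 < t ∧ y = t • (x - fun _ => τ)}

/-- The set of `k` such that some vector with the first `k` coordinates negative and
the remaining coordinates positive belongs to `C`; `κ_C` is its greatest element. -/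
def kset {n : ℕ} (C : Set (Fin n → ℝ)) : Set ℕ :=
  {k : ℕ | ∃ α : Fin n → ℝ, (∀ i, 0 < α i) ∧
    (fun i : Fin n => if (i : ℕ) < k then -α i else α i) ∈ C}
theorem stmt4 {n : ℕ} (Γ : Set (Fin n → ℝ)) (f : (Fin n → ℝ) → ℝ)
    (hopen : IsOpen Γ) (hconv : Convex ℝ Γ)
    (hcone : ∀ x ∈ Γ, ∀ t : ℝ, 0 < t → t • x ∈ Γ)
    (horth : {x : Fin n → ℝ | ∀ i, 0 < x i} ⊆ Γ)
    (hΓsym : ∀ (g : Equiv.Perm (Fin n)), ∀ x ∈ Γ, x ∘ g ∈ Γ)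
    (hfsym : ∀ (g : Equiv.Perm (Fin n)), ∀ x ∈ Γ, f (x ∘ g) = f x)
    (hconc : ConcaveOn ℝ Γ f)
    (hsmooth : ContDiffOn ℝ (⊤ : ℕ∞) f Γ)
    (hdiff : ∀ x ∈ Γ, DifferentiableAt ℝ f x)
    (hpd : ∀ x ∈ Γ, ∀ i, 0 ≤ pd f x i)
    (σ : ℝ) (hσ : ∃ μ ∈ Γ, σ < f μ) (hne : ∃ x ∈ Γ, f x = σ)
    (τ : ℝ) (hτ : IsGLB (tset Γ f σ) τ)
    (κ : ℕ) (hκmax : IsGreatest (kset (lcone Γ f σ τ)) κ) :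
    ∃ ϑ : ℝ, 0 < ϑ ∧ ∀ lam ∈ Γ, f lam = σ →
      (∀ i j : Fin n, i ≤ j → lam i ≤ lam j) →
      ∀ i : Fin n, (i : ℕ) ≤ κ → ϑ * ∑ j, pd f lam j ≤ pd f lam i := by
  rcases Nat.eq_zero_or_pos n with hn | hn
  · subst hn
    exact ⟨1, one_pos, fun lam _ _ _ i _ => i.elim0⟩
  obtain ⟨α, hα, hvmem⟩ := hκmax.1
  obtain ⟨μ, hμΓ, hμσ, t, ht, hveq⟩ := hvmem
  set v : Fin n → ℝ := fun i => if (i:ℕ) < κ then -α i else α i with hv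
  have hne' : (Finset.univ : Finset (Fin n)).Nonempty := ⟨⟨0, hn⟩, Finset.mem_univ _⟩
  set m := Finset.univ.inf' hne' α with hm
  have hm0 : 0 < m := (Finset.lt_inf'_iff hne').mpr (fun i _ => hα i)
  have hmle : ∀ i, m ≤ α i := fun i => Finset.inf'_le α (Finset.mem_univ i)
  set Kneg := Finset.univ.filter (fun j : Fin n => (j:ℕ) < κ) with hKneg
  set Kpos := Finset.univ.filter (fun j : Fin n => ¬ ((j:ℕ) < κ)) with hKpos
  set A := ∑ i ∈ Kpos, α i with hA
  have hA0 : 0 ≤ A := Finset.sum_nonneg fun i _ => (hα i).le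
  have hden : 0 < A + m * n := by
    have : (0:ℝ) < m * n := by positivity
    linarith
  refine ⟨m / (A + m * n), div_pos hm0 hden, ?_⟩
  intro lam hlamΓ hlamσ hsorted i hiκ
  set S := ∑ j, pd f lam j with hS
  have hpdnn : ∀ j, 0 ≤ pd f lam j := hpd lam hlamΓ
  by_cases hS0 : S = 0
  · rw [hS0, mul_zero]; exact hpdnn i
  have hSpos : 0 < S := lt_of_le_of_ne (Finset.sum_nonneg fun j _ => hpdnn j) (Ne.symm hS0)
  -- τ bound
  have hτle : τ * S ≤ ∑ j, pd f lam j * lam j := by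
    have hmem : (∑ j, pd f lam j * lam j) / S ∈ tset Γ f σ := ⟨lam, hlamΓ, hlamσ, rfl⟩
    have h1 := hτ.1 hmem
    calc τ * S ≤ ((∑ j, pd f lam j * lam j) / S) * S := by nlinarith
      _ = _ := div_mul_cancel₀ _ hS0
  -- gradient inequality
  have hgi := grad_ineq hconc hlamΓ hμΓ (hdiff lam hlamΓ)
  rw [hμσ, hlamσ, fderiv_apply_sum] at hgi
  have h0 : 0 ≤ ∑ j, pd f lam j * (μ j - lam j) := by
    have : ∑ j, pd f lam j * (μ - lam) j = ∑ j, pd f lam j * (μ j - lam j) := by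
      apply Finset.sum_congr rfl; intro j _; simp
    linarith [hgi, this ▸ (by linarith [hgi] : (0:ℝ) ≤ ∑ j, pd f lam j * (μ - lam) j)]
  -- key inequality
  have hvj : ∀ j, v j = t * (μ j - τ) := by
    intro j
    have := congrFun hveq j
    simpa [hv, Pi.smul_apply, smul_eq_mul] using this
  have hKey : 0 ≤ ∑ j, pd f lam j * v j := by
    have e1 : ∑ j, pd f lam j * v j = t * ∑ j, pd f lam j * (μ j - τ) := by
      rw [Finset.mul_sum]
      apply Finset.sum_congr rfl; intro j _; rw [hvj j]; ring
    have e2 : ∑ j, pd f lam j * (μ j - τ) =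
        (∑ j, pd f lam j * μ j) - τ * S := by
      rw [hS, Finset.mul_sum, ← Finset.sum_sub_distrib]
      apply Finset.sum_congr rfl; intro j _; ring
    have e3 : ∑ j, pd f lam j * (μ j - lam j) =
        (∑ j, pd f lam j * μ j) - ∑ j, pd f lam j * lam j := by
      rw [← Finset.sum_sub_distrib]
      apply Finset.sum_congr rfl; intro j _; ring
    rw [e1, e2]
    have : τ * S ≤ ∑ j, pd f lam j * μ j := by
      rw [e3] at h0; linarith
    nlinarith
  have hsplit : ∑ j, pd f lam j * v j =
      (∑ j ∈ Kpos, pd f lam j * α j) - ∑ j ∈ Kneg, pd f lam j * α j := by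
    rw [← Finset.sum_filter_add_sum_filter_not Finset.univ (fun j : Fin n => (j:ℕ) < κ)
      (fun j => pd f lam j * v j)]
    rw [hKneg, hKpos]
    have e4 : ∑ j ∈ Finset.univ.filter (fun j : Fin n => (j:ℕ) < κ), pd f lam j * v j
        = -∑ j ∈ Finset.univ.filter (fun j : Fin n => (j:ℕ) < κ), pd f lam j * α j := by
      rw [← Finset.sum_neg_distrib]
      apply Finset.sum_congr rfl; intro j hj
      rw [hv]; simp only [Finset.mem_filter] at hj
      simp [hj.2]
    have e5 : ∑ j ∈ Finset.univ.filter (fun j : Fin n => ¬((j:ℕ) < κ)), pd f lam j * v j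
        = ∑ j ∈ Finset.univ.filter (fun j : Fin n => ¬((j:ℕ) < κ)), pd f lam j * α j := by
      apply Finset.sum_congr rfl; intro j hj
      rw [hv]; simp only [Finset.mem_filter] at hj
      simp [hj.2]
    rw [e4, e5]; ring
  have hK : ∑ j ∈ Kneg, pd f lam j * α j ≤ ∑ j ∈ Kpos, pd f lam j * α j := by
    rw [hsplit] at hKey; linarith
  rcases lt_or_ge κ n with hκn | hκn
  swap
  · -- κ ≥ n : Kpos empty, so S = 0, contradiction
    exfalso
    have hKposE : Kpos = ∅ := by
      rw [hKpos]
      apply Finset.filter_false_of_mem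
      intro j _
      push_neg
      exact lt_of_lt_of_le j.isLt hκn
    rw [hKposE, Finset.sum_empty] at hK
    have hall : ∀ j ∈ Kneg, pd f lam j * α j = 0 := by
      intro j hj
      have hnn : ∀ j ∈ Kneg, 0 ≤ pd f lam j * α j :=
        fun j _ => mul_nonneg (hpdnn j) (hα j).le
      have := (Finset.sum_eq_zero_iff_of_nonneg hnn).mp
        (le_antisymm hK (Finset.sum_nonneg hnn))
      exact this j hj
    have hSz : S = 0 := by
      rw [hS]
      apply Finset.sum_eq_zero
      intro j _
      have hjK : j ∈ Kneg := by
        rw [hKneg]; simp [lt_of_lt_of_le j.isLt hκn]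
      have := hall j hjK
      have := hα j
      nlinarith [hall j hjK, hα j, hpdnn j]
    exact hS0 hSz
  -- κ < n
  set c : Fin n := ⟨κ, hκn⟩ with hc
  have hmono : ∀ a b : Fin n, a ≤ b → pd f lam b ≤ pd f lam a :=
    fun a b hab => pd_antitone hopen hΓsym hfsym hconc hdiff hlamΓ (hsorted a b hab)
  have hci : pd f lam c ≤ pd f lam i := hmono i c (by simpa [hc, Fin.le_def] using hiκ)
  have hRHS : ∑ j ∈ Kpos, pd f lam j * α j ≤ pd f lam c * A := by
    rw [hA, Finset.mul_sum]
    apply Finset.sum_le_sum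
    intro j hj
    rw [hKpos] at hj; simp only [Finset.mem_filter] at hj
    have hcj : c ≤ j := by rw [Fin.le_def]; simpa [hc] using Nat.le_of_not_lt hj.2
    exact mul_le_mul_of_nonneg_right (hmono c j hcj) (hα j).le
  have hLHS : m * ∑ j ∈ Kneg, pd f lam j ≤ ∑ j ∈ Kneg, pd f lam j * α j := by
    rw [Finset.mul_sum]
    apply Finset.sum_le_sum
    intro j _
    calc m * pd f lam j = pd f lam j * m := by ring
      _ ≤ pd f lam j * α j := mul_le_mul_of_nonneg_left (hmle j) (hpdnn j)
  have hPosS : ∑ j ∈ Kpos, pd f lam j ≤ (n : ℝ) * pd f lam c := by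
    have h1 : ∑ j ∈ Kpos, pd f lam j ≤ Kpos.card • pd f lam c := by
      apply Finset.sum_le_card_nsmul
      intro j hj
      rw [hKpos] at hj; simp only [Finset.mem_filter] at hj
      have hcj : c ≤ j := by rw [Fin.le_def]; simpa [hc] using Nat.le_of_not_lt hj.2
      exact hmono c j hcj
    have h2 : (Kpos.card : ℝ) ≤ n := by
      have := Finset.card_le_card (Finset.subset_univ Kpos)
      simp only [Finset.card_univ, Fintype.card_fin] at this
      exact_mod_cast this
    have h3 : (0:ℝ) ≤ pd f lam c := hpdnn c
    calc ∑ j ∈ Kpos, pd f lam j ≤ (Kpos.card : ℝ) * pd f lam c := by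
          simpa [nsmul_eq_mul] using h1
      _ ≤ (n : ℝ) * pd f lam c := mul_le_mul_of_nonneg_right h2 h3
  have hSsplit : S = (∑ j ∈ Kneg, pd f lam j) + ∑ j ∈ Kpos, pd f lam j := by
    rw [hS, hKneg, hKpos,
      Finset.sum_filter_add_sum_filter_not Finset.univ (fun j : Fin n => (j:ℕ) < κ)]
  have hmain : m * S ≤ pd f lam c * (A + m * n) := by
    have h1 : m * ∑ j ∈ Kneg, pd f lam j ≤ pd f lam c * A := le_trans hLHS (le_trans hK hRHS)
    have h2 : m * ∑ j ∈ Kpos, pd f lam j ≤ m * ((n : ℝ) * pd f lam c) :=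
      mul_le_mul_of_nonneg_left hPosS hm0.le
    have h3 : m * S = m * (∑ j ∈ Kneg, pd f lam j) + m * (∑ j ∈ Kpos, pd f lam j) := by
      rw [hSsplit]; ring
    have h4 : pd f lam c * (A + m * n) = pd f lam c * A + m * ((n:ℝ) * pd f lam c) := by
      ring
    linarith
  have : m / (A + m * n) * S ≤ pd f lam c := by
    rw [div_mul_eq_mul_div, div_le_iff₀ hden]
    exact hmain
  linarith
end

section
/- Let f be a differentiable concave function on an open convex cone Γ ⊆ ℝⁿ. The following are equivalent: (i) lim_{t→+∞} f(tλ) > −∞ for all λ ∈ Γ; (ii) limsup_{t→+∞} f(tλ)/t ≥ 0 for all λ ∈ Γ; (iii) ∑_i f_i(λ)μ_i ≥ 0 for all λ, μ ∈ Γ; (iv) ∑_i f_i(λ)λ_i ≥ 0 for all λ ∈ Γ. -/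
open Finset Filter Topology

lemma sum_pd {n : ℕ} (f : (Fin n → ℝ) → ℝ) (x v : Fin n → ℝ) :
    ∑ i, pd f x i * v i = fderiv ℝ f x v := by
  have h : v = ∑ i, v i • (Pi.single i 1 : Fin n → ℝ) := by
    funext j
    simp [Finset.sum_apply, Pi.single_apply, mul_ite]
  conv_rhs => rw [h]
  rw [map_sum]
  simp [pd, mul_comm]

lemma grad_le {n : ℕ} {Γ : Set (Fin n → ℝ)} {f : (Fin n → ℝ) → ℝ}
    (hconc : ConcaveOn ℝ Γ f)
    (hdiff : ∀ x ∈ Γ, DifferentiableAt ℝ f x)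
    {x y : Fin n → ℝ} (hx : x ∈ Γ) (hy : y ∈ Γ) :
    f y - f x ≤ fderiv ℝ f x (y - x) := by
  set L := AffineMap.lineMap (k := ℝ) x y with hL
  have hconcL : ConcaveOn ℝ (L ⁻¹' Γ) (f ∘ L) := hconc.comp_affineMap L
  have h0 : (0:ℝ) ∈ L ⁻¹' Γ := by
    simp only [Set.mem_preimage, hL, AffineMap.lineMap_apply_zero]; exact hx
  have h1 : (1:ℝ) ∈ L ⁻¹' Γ := by
    simp only [Set.mem_preimage, hL, AffineMap.lineMap_apply_one]; exact hy
  have hd : HasDerivAt (f ∘ L) (fderiv ℝ f x (y - x)) 0 := by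
    have hL0 : HasDerivAt (L : ℝ → (Fin n → ℝ)) (y - x) 0 := AffineMap.hasDerivAt_lineMap
    have h2 : HasFDerivAt f (fderiv ℝ f x) (L 0) := by
      rw [hL, AffineMap.lineMap_apply_zero]; exact (hdiff x hx).hasFDerivAt
    exact h2.comp_hasDerivAt 0 hL0
  have := hconcL.slope_le_of_hasDerivAt h0 h1 zero_lt_one hd
  simpa [slope, hL, Function.comp] using this

theorem stmt11 {n : ℕ} (Γ : Set (Fin n → ℝ)) (f : (Fin n → ℝ) → ℝ)
    (hopen : IsOpen Γ) (hconv : Convex ℝ Γ)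
    (hcone : ∀ x ∈ Γ, ∀ t : ℝ, 0 < t → t • x ∈ Γ)
    (hconc : ConcaveOn ℝ Γ f)
    (hdiff : ∀ x ∈ Γ, DifferentiableAt ℝ f x) :
    -- (i) `lim_{t→+∞} f(tλ) > -∞`
    ((∀ lam ∈ Γ, ∃ c : ℝ, ∀ᶠ t : ℝ in atTop, c ≤ f (t • lam)) ↔
      -- (ii) `limsup_{t→+∞} f(tλ)/t ≥ 0`
      (∀ lam ∈ Γ, ∀ ε : ℝ, 0 < ε → ∃ᶠ t : ℝ in atTop, -ε ≤ f (t • lam) / t)) ∧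
    ((∀ lam ∈ Γ, ∀ ε : ℝ, 0 < ε → ∃ᶠ t : ℝ in atTop, -ε ≤ f (t • lam) / t) ↔
      -- (iii)
      (∀ lam ∈ Γ, ∀ μ ∈ Γ, 0 ≤ ∑ i, pd f lam i * μ i)) ∧
    ((∀ lam ∈ Γ, ∀ μ ∈ Γ, 0 ≤ ∑ i, pd f lam i * μ i) ↔
      -- (iv)
      (∀ lam ∈ Γ, 0 ≤ ∑ i, pd f lam i * lam i)) := by
  have h12 : (∀ lam ∈ Γ, ∃ c : ℝ, ∀ᶠ t : ℝ in atTop, c ≤ f (t • lam)) →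
      (∀ lam ∈ Γ, ∀ ε : ℝ, 0 < ε → ∃ᶠ t : ℝ in atTop, -ε ≤ f (t • lam) / t) := by
    intro h1 lam hlam ε hε
    obtain ⟨c, hc⟩ := h1 lam hlam
    have hev : ∀ᶠ t : ℝ in atTop, -ε ≤ f (t • lam) / t := by
      filter_upwards [hc, eventually_ge_atTop (max 1 (|c| / ε))] with t hct ht
      have ht1 : (1:ℝ) ≤ t := le_trans (le_max_left _ _) ht
      have htpos : (0:ℝ) < t := lt_of_lt_of_le one_pos ht1
      have habs : |c| ≤ t * ε := (div_le_iff₀ hε).mp (le_trans (le_max_right _ _) ht)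
      have h1' : -ε ≤ c / t := by
        rw [le_div_iff₀ htpos]
        nlinarith [neg_abs_le c]
      exact h1'.trans (by gcongr)
    exact hev.frequently
  have h23 : (∀ lam ∈ Γ, ∀ ε : ℝ, 0 < ε → ∃ᶠ t : ℝ in atTop, -ε ≤ f (t • lam) / t) →
      (∀ lam ∈ Γ, ∀ μ ∈ Γ, 0 ≤ ∑ i, pd f lam i * μ i) := by
    intro h2 lam hlam μ hμ
    rw [sum_pd]
    by_contra hD
    push_neg at hD
    set D := fderiv ℝ f lam μ with hDdef
    set A := fderiv ℝ f lam lam with hAdef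
    have hε : (0:ℝ) < -D / 4 := by linarith
    have hfreq := h2 μ hμ (-D / 4) hε
    have t1 : Tendsto (fun t : ℝ => f lam / t) atTop (𝓝 0) :=
      tendsto_const_nhds.div_atTop tendsto_id
    have t2 : Tendsto (fun t : ℝ => A / t) atTop (𝓝 0) :=
      tendsto_const_nhds.div_atTop tendsto_id
    have e1 : ∀ᶠ t : ℝ in atTop, |f lam / t| < -D / 4 := by
      have := Metric.tendsto_nhds.mp t1 (-D / 4) hε
      simpa [Real.dist_eq, abs_div] using this
    have e2 : ∀ᶠ t : ℝ in atTop, |A / t| < -D / 4 := by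
      have := Metric.tendsto_nhds.mp t2 (-D / 4) hε
      simpa [Real.dist_eq, abs_div] using this
    obtain ⟨t, hle, htpos, h1', h2'⟩ :=
      (hfreq.and_eventually ((eventually_gt_atTop 0).and (e1.and e2))).exists
    have htmu : t • μ ∈ Γ := hcone μ hμ t htpos
    have hgrad := grad_le hconc hdiff hlam htmu
    rw [map_sub, map_smul, smul_eq_mul] at hgrad
    have hb : -(-D / 4) * t ≤ f (t • μ) := (le_div_iff₀ htpos).mp hle
    rw [abs_div, abs_of_pos htpos, div_lt_iff₀ htpos] at h1' h2'
    nlinarith [le_abs_self (f lam), neg_abs_le A, htpos]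
  have h34 : (∀ lam ∈ Γ, ∀ μ ∈ Γ, 0 ≤ ∑ i, pd f lam i * μ i) →
      (∀ lam ∈ Γ, 0 ≤ ∑ i, pd f lam i * lam i) :=
    fun h lam hlam => h lam hlam lam hlam
  have h41 : (∀ lam ∈ Γ, 0 ≤ ∑ i, pd f lam i * lam i) →
      (∀ lam ∈ Γ, ∃ c : ℝ, ∀ᶠ t : ℝ in atTop, c ≤ f (t • lam)) := by
    intro h4 lam hlam
    refine ⟨f lam, ?_⟩
    filter_upwards [eventually_ge_atTop 1] with t ht
    have htpos : (0:ℝ) < t := lt_of_lt_of_le one_pos ht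
    have htl : t • lam ∈ Γ := hcone lam hlam t htpos
    have h4' := h4 (t • lam) htl
    rw [sum_pd, map_smul, smul_eq_mul] at h4'
    have hBl : 0 ≤ fderiv ℝ f (t • lam) lam := by nlinarith
    have hgrad := grad_le hconc hdiff htl hlam
    rw [map_sub, map_smul, smul_eq_mul] at hgrad
    nlinarith [mul_nonneg (sub_nonneg.mpr ht) hBl]
  exact ⟨⟨h12, fun h2 => h41 (h34 (h23 h2))⟩, ⟨h23, fun h3 => h12 (h41 (h34 h3))⟩,
    ⟨h34, fun h4 => h23 (h12 (h41 h4))⟩⟩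
end
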